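/- arXiv:1206.4000 — 3 statements merged into one kernel-verified Lean document; each statement's English description precedes it below -/
import Mathlib

section
/- If U is uniformly distributed on [0,1] and A = -(a/n)·log(1 - U^a) for a > 0 and positive integer n, then the characteristic function of A is E[exp(i t A)] = Γ(1 + 1/a) Γ(1 - i t a/n) / Γ(1 - i t a/n + 1/a). -/
/-!
Pushing forward along `U`, the characteristic function is `∫₀¹ (1 - u^a)^(s - 1) du` with
`s = 1 - ita/n`, since `exp (itA) = (1 - U^a)^(-ita/n)`. The substitution `x = u^a` turns this into
`a⁻¹ B(1/a, s)`, and `B = ΓΓ/Γ` together with `a⁻¹ Γ(1/a) = Γ(1 + 1/a)` gives the result.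
-/

open MeasureTheory Complex Set
open scoped ProbabilityTheory

theorem Complex.mul_betaIntegral_eq {z s : ℂ} (hz : 0 < z.re) (hs : 0 < s.re) :
    z * betaIntegral z s = Gamma (z + 1) * Gamma s / Gamma (s + z) := by
  have hzs : Gamma (s + z) ≠ 0 := Gamma_ne_zero_of_re_pos (by rw [add_re]; linarith)
  rw [Gamma_add_one z (fun h => by simp [h] at hz), eq_div_iff hzs, add_comm s,
    mul_assoc z (Gamma z), Gamma_mul_Gamma_eq_betaIntegral hz hs]
  ring

theorem Real.rpow_image_Ioo_zero_one {a : ℝ} (ha : 0 < a) :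
    (fun u : ℝ => u ^ a) '' Ioo 0 1 = Ioo 0 1 := by
  refine Subset.antisymm ?_ fun y hy => ⟨y ^ a⁻¹, ?_, Real.rpow_inv_rpow hy.1.le ha.ne'⟩
  · rintro _ ⟨u, hu, rfl⟩
    exact ⟨Real.rpow_pos_of_pos hu.1 a, Real.rpow_lt_one hu.1.le hu.2 ha⟩
  · exact ⟨Real.rpow_pos_of_pos hy.1 _, Real.rpow_lt_one hy.1.le hy.2 (inv_pos.mpr ha)⟩

theorem integral_Ioo_one_sub_rpow_cpow {a : ℝ} (ha : 0 < a) (c : ℂ) :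
    ∫ u in Ioo (0 : ℝ) 1, ((1 - u ^ a : ℝ) : ℂ) ^ c =
      (a : ℂ)⁻¹ * betaIntegral (a : ℂ)⁻¹ (c + 1) := by
  have hderiv : ∀ u ∈ Ioo (0 : ℝ) 1,
      HasDerivWithinAt (fun u : ℝ => u ^ a) (a * u ^ (a - 1)) (Ioo 0 1) u :=
    fun u hu => (Real.hasDerivAt_rpow_const (Or.inl hu.1.ne')).hasDerivWithinAt
  have hinj : InjOn (fun u : ℝ => u ^ a) (Ioo 0 1) :=
    fun u hu v hv => (Real.rpow_left_injOn ha.ne').eq_iff hu.1.le hv.1.le |>.mp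
  have hsubst := integral_image_eq_integral_abs_deriv_smul measurableSet_Ioo hderiv hinj
    (fun x : ℝ => (a⁻¹ * x ^ (a⁻¹ - 1)) • ((1 - x : ℝ) : ℂ) ^ c)
  have hjac : ∀ u ∈ Ioo (0 : ℝ) 1, |a * u ^ (a - 1)| * (a⁻¹ * (u ^ a) ^ (a⁻¹ - 1)) = 1 := by
    intro u hu
    rw [abs_of_pos (mul_pos ha (Real.rpow_pos_of_pos hu.1 _)), ← Real.rpow_mul hu.1.le,
      mul_mul_mul_comm, mul_inv_cancel₀ ha.ne', one_mul, ← Real.rpow_add hu.1, mul_sub,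
      mul_inv_cancel₀ ha.ne']
    simp
  calc ∫ u in Ioo (0 : ℝ) 1, ((1 - u ^ a : ℝ) : ℂ) ^ c
      = ∫ u in Ioo (0 : ℝ) 1, |a * u ^ (a - 1)| • (a⁻¹ * (u ^ a) ^ (a⁻¹ - 1)) •
          ((1 - u ^ a : ℝ) : ℂ) ^ c :=
        setIntegral_congr_fun measurableSet_Ioo fun u hu => by rw [smul_smul, hjac u hu, one_smul]
    _ = ∫ x in Ioo (0 : ℝ) 1, (a⁻¹ * x ^ (a⁻¹ - 1)) • ((1 - x : ℝ) : ℂ) ^ c := by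
        rw [← hsubst, Real.rpow_image_Ioo_zero_one ha]
    _ = (a : ℂ)⁻¹ * betaIntegral (a : ℂ)⁻¹ (c + 1) := by
        rw [betaIntegral, intervalIntegral.integral_of_le zero_le_one,
          integral_Ioc_eq_integral_Ioo, ← integral_const_mul]
        refine setIntegral_congr_fun measurableSet_Ioo fun x hx => ?_
        rw [real_smul, add_sub_cancel_right, ofReal_mul, ofReal_cpow hx.1.le]
        push_cast
        ring

theorem integral_Ioo_one_sub_rpow_cpow_eq_Gamma {a : ℝ} (ha : 0 < a) {s : ℂ} (hs : 0 < s.re) :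
    ∫ u in Ioo (0 : ℝ) 1, ((1 - u ^ a : ℝ) : ℂ) ^ (s - 1) =
      Gamma (1 + 1 / a) * Gamma s / Gamma (s + 1 / a) := by
  have ha' : 0 < ((a : ℂ)⁻¹).re := by simpa using ha
  rw [integral_Ioo_one_sub_rpow_cpow ha, sub_add_cancel, mul_betaIntegral_eq ha' hs, one_div,
    add_comm 1]

theorem charFun_of_neg_log_general (Ω : Type*) [MeasureSpace Ω] [IsProbabilityMeasure (ℙ : Measure Ω)]
    (U : Ω → ℝ) (hU : Measure.map U ℙ = volume.restrict (Set.Icc (0:ℝ) 1))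
    (a : ℝ) (ha : 0 < a) (n : ℕ)
    (A : Ω → ℝ) (hA : ∀ ω : Ω, A ω = -(a / n) * Real.log (1 - U ω ^ a)) (t : ℝ) :
    ∫ ω : Ω, Complex.exp (Complex.I * t * A ω) ∂(ℙ : Measure Ω) =
      Complex.Gamma (1 + 1 / a) * Complex.Gamma (1 - Complex.I * t * a / n) /
        Complex.Gamma (1 - Complex.I * t * a / n + 1 / a) := by
  have hUm : AEMeasurable U ℙ := .of_map_ne_zero (by simp [hU])
  have hcpow : ∀ u ∈ Ioo (0 : ℝ) 1, exp (I * t * ((-(a / n) * Real.log (1 - u ^ a) : ℝ) : ℂ)) =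
      ((1 - u ^ a : ℝ) : ℂ) ^ (1 - I * t * a / n - 1) := by
    intro u hu
    have hpos : 0 < 1 - u ^ a := sub_pos.2 (Real.rpow_lt_one hu.1.le hu.2 ha)
    rw [cpow_def_of_ne_zero (ofReal_ne_zero.2 hpos.ne'), ← ofReal_log hpos.le]
    push_cast
    ring_nf
  calc ∫ ω, exp (I * t * A ω)
      = ∫ u in Icc (0 : ℝ) 1, exp (I * t * ((-(a / n) * Real.log (1 - u ^ a) : ℝ) : ℂ)) := by
        rw [← hU, integral_map hUm (Measurable.aestronglyMeasurable (by fun_prop))]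
        simp only [hA]
    _ = ∫ u in Ioo (0 : ℝ) 1, ((1 - u ^ a : ℝ) : ℂ) ^ (1 - I * t * a / n - 1) := by
        rw [integral_Icc_eq_integral_Ioo]
        exact setIntegral_congr_fun measurableSet_Ioo hcpow
    _ = _ := integral_Ioo_one_sub_rpow_cpow_eq_Gamma ha (by simp)

/-- If `U` is uniform on `[0,1]` and `A = -(a/n)·log(1 - U^a)` with `a > 0`, `n` a positive
integer, then `E[exp(itA)] = Γ(1+1/a) Γ(1 - ita/n) / Γ(1 - ita/n + 1/a)`. -/
theorem charFun_of_neg_log (Ω : Type*) [MeasureSpace Ω] [IsProbabilityMeasure (ℙ : Measure Ω)]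
    (U : Ω → ℝ) (hU : Measure.map U ℙ = volume.restrict (Set.Icc (0:ℝ) 1))
    (a : ℝ) (ha : 0 < a) (n : ℕ) (hn : 0 < n)
    (A : Ω → ℝ) (hA : ∀ ω : Ω, A ω = -(a / n) * Real.log (1 - U ω ^ a)) (t : ℝ) :
    ∫ ω : Ω, Complex.exp (Complex.I * t * A ω) ∂(ℙ : Measure Ω) =
      Complex.Gamma (1 + 1 / a) * Complex.Gamma (1 - Complex.I * t * a / n) /
        Complex.Gamma (1 - Complex.I * t * a / n + 1 / a) :=
  charFun_of_neg_log_general Ω U hU a ha n A hA t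
end

section
/- The first cumulant (mean) of A = -(a/n)·Σᵢ log(1 - F(Xᵢ)^a) equals a·Σ_{l=1}^∞ (1/l - 1/(l + 1/a)) = a·(ψ(1 + 1/a) + γ), where ψ is the digamma function and γ is Euler's constant. In particular, for a = 1 the mean is 1. -/
open MeasureTheory
open scoped ProbabilityTheory

/-- The digamma function `ψ = Γ'/Γ`. -/
noncomputable def digamma (x : ℝ) : ℝ := deriv Real.Gamma x / Real.Gamma x

/-!
Since `F` is continuous, every `F (Xᵢ)` is uniform on `(0, 1)`, so the mean of `A` is
`-a ∫₀¹ log (1 - u ^ a) du`. Expanding `-log (1 - u ^ a) = ∑_{l ≥ 1} u ^ (a l) / l` and integrating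
termwise gives `a ∑_{l ≥ 1} 1 / (l (a l + 1)) = a ∑_{l ≥ 1} (1 / l - 1 / (l + 1 / a))`.
By `ψ (y + 1) = ψ y + 1 / y` and `ψ 1 = -γ`, the partial sums of `∑_{l ≥ 1} (1 / l - 1 / (l + x))`
equal `ψ (1 + x) + γ - (ψ (n + 1 + x) - ψ (n + 1))`, and the error term tends to `0` because
`ψ = (log Γ)'` is monotone, `log Γ` being convex.
-/

open Real Set Filter Topology ProbabilityTheory

section Digamma

variable {x y : ℝ}

lemma differentiableAt_Gamma_of_pos (hy : 0 < y) : DifferentiableAt ℝ Gamma y :=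
  differentiableAt_Gamma fun m => ((neg_nonpos.2 m.cast_nonneg).trans_lt hy).ne'

lemma differentiableAt_log_Gamma (hy : 0 < y) : DifferentiableAt ℝ (log ∘ Gamma) y :=
  (differentiableAt_Gamma_of_pos hy).log (Gamma_pos_of_pos hy).ne'

lemma digamma_eq_deriv_log_Gamma (hy : 0 < y) : digamma y = deriv (log ∘ Gamma) y := by
  rw [Function.comp_def, deriv.log (differentiableAt_Gamma_of_pos hy) (Gamma_pos_of_pos hy).ne',
    digamma]

lemma digamma_one : digamma 1 = -eulerMascheroniConstant := by
  rw [digamma, Gamma_one, div_one, eulerMascheroniConstant_eq_neg_deriv, neg_neg]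

lemma digamma_add_one (hy : 0 < y) : digamma (y + 1) = digamma y + 1 / y := by
  have hlog : (log ∘ Gamma) =ᶠ[𝓝 y] fun t => (log ∘ Gamma) (t + 1) - log t := by
    filter_upwards [eventually_gt_nhds hy] with t ht
    simp only [Function.comp_apply, Gamma_add_one ht.ne',
      log_mul ht.ne' (Gamma_pos_of_pos ht).ne', add_sub_cancel_left]
  rw [digamma_eq_deriv_log_Gamma (by linarith), digamma_eq_deriv_log_Gamma hy, hlog.deriv_eq,
    deriv_fun_sub _ (differentiableAt_log hy.ne'), deriv_comp_add_const, Real.deriv_log, one_div]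
  · ring
  · exact (differentiableAt_log_Gamma (by linarith)).comp y (differentiableAt_id.add_const 1)

lemma digamma_add_nat (hy : 0 < y) (n : ℕ) :
    digamma (y + n) = digamma y + ∑ j ∈ Finset.range n, 1 / (y + j) := by
  induction n with
  | zero => simp
  | succ n ih =>
    rw [Nat.cast_succ, ← add_assoc, digamma_add_one (by positivity), ih, Finset.sum_range_succ,
      add_assoc]

lemma monotoneOn_digamma : MonotoneOn digamma (Ioi 0) := by
  have := convexOn_log_Gamma.monotoneOn_deriv fun y hy => differentiableAt_log_Gamma hy
  intro u hu v hv huv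
  rw [digamma_eq_deriv_log_Gamma hu, digamma_eq_deriv_log_Gamma hv]
  exact this hu hv huv

lemma digamma_add_sub_digamma_le (hy : 0 < y) (hx : 0 ≤ x) :
    digamma (y + x) - digamma y ≤ ⌈x⌉₊ / y := by
  calc digamma (y + x) - digamma y ≤ digamma (y + ⌈x⌉₊) - digamma y := by
        gcongr
        exact monotoneOn_digamma (by simp; positivity) (by simp; positivity)
          (by gcongr; exact Nat.le_ceil x)
    _ = ∑ j ∈ Finset.range ⌈x⌉₊, 1 / (y + j) := by rw [digamma_add_nat hy]; ring
    _ ≤ ∑ j ∈ Finset.range ⌈x⌉₊, 1 / y := by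
        gcongr with j
        simp
    _ = ⌈x⌉₊ / y := by rw [Finset.sum_const, Finset.card_range, nsmul_eq_mul, mul_one_div]

lemma sum_range_eq_digamma_sub (hx : 0 ≤ x) (n : ℕ) :
    ∑ k ∈ Finset.range n, (1 / (k + 1 : ℝ) - 1 / (k + 1 + x)) =
      digamma (1 + x) + eulerMascheroniConstant - (digamma (n + 1 + x) - digamma (n + 1)) := by
  have h1 := digamma_add_nat one_pos n
  have h2 := digamma_add_nat (by positivity : 0 < 1 + x) n
  rw [digamma_one] at h1
  have hsum : ∑ k ∈ Finset.range n, (1 / (k + 1 : ℝ) - 1 / (k + 1 + x)) =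
      ∑ k ∈ Finset.range n, 1 / (1 + (k : ℝ)) - ∑ k ∈ Finset.range n, 1 / (1 + x + k) := by
    rw [← Finset.sum_sub_distrib]
    exact Finset.sum_congr rfl fun k _ => by ring
  rw [show (n : ℝ) + 1 + x = 1 + x + n by ring, add_comm (n : ℝ), h1, h2, hsum]
  ring

lemma tendsto_digamma_add_sub_digamma (hx : 0 ≤ x) :
    Tendsto (fun n : ℕ => digamma (n + 1 + x) - digamma (n + 1)) atTop (𝓝 0) := by
  have hbound : Tendsto (fun n : ℕ => (⌈x⌉₊ : ℝ) / (n + 1)) atTop (𝓝 0) := by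
    simpa [div_eq_mul_inv] using tendsto_one_div_add_atTop_nhds_zero_nat.const_mul (⌈x⌉₊ : ℝ)
  refine tendsto_of_tendsto_of_tendsto_of_le_of_le tendsto_const_nhds hbound (fun n => ?_)
    fun n => digamma_add_sub_digamma_le (by positivity) hx
  exact sub_nonneg.2 <| monotoneOn_digamma (by simp; positivity) (by simp; positivity)
    (le_add_of_nonneg_right hx)

theorem hasSum_digamma_one_add (hx : 0 ≤ x) :
    HasSum (fun l : ℕ+ => 1 / (l : ℝ) - 1 / (l + x))
      (digamma (1 + x) + eulerMascheroniConstant) := by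
  rw [hasSum_pnat_iff_hasSum_succ (f := fun k : ℕ => 1 / (k : ℝ) - 1 / (k + x)),
    hasSum_iff_tendsto_nat_of_nonneg]
  · have := (tendsto_const_nhds (x := digamma (1 + x) + eulerMascheroniConstant)).sub
      (tendsto_digamma_add_sub_digamma hx)
    rw [sub_zero] at this
    refine this.congr fun n => ?_
    rw [← sum_range_eq_digamma_sub hx]
    push_cast
    rfl
  · intro k
    push_cast
    exact sub_nonneg.2 (one_div_le_one_div_of_le (by positivity) (by linarith))

end Digamma

namespace ProbabilityTheory

variable {μ : Measure ℝ} [IsProbabilityMeasure μ]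

lemma measure_cdf_preimage_Iic (hcont : Continuous (cdf μ)) {u : ℝ} (hu : u < 1) :
    μ (cdf μ ⁻¹' Iic u) = ENNReal.ofReal u := by
  set S := cdf μ ⁻¹' Iic u
  rcases S.eq_empty_or_nonempty with hS | hS
  · have hu0 : u ≤ 0 := by
      by_contra! hu0
      obtain ⟨t, ht⟩ := ((tendsto_cdf_atBot μ).eventually_lt_const hu0).exists
      exact hS.subset (show t ∈ S from ht.le)
    rw [hS, measure_empty, ENNReal.ofReal_of_nonpos hu0]
  have hbdd : BddAbove S := by
    obtain ⟨M, hM⟩ := ((tendsto_cdf_atTop μ).eventually_const_lt hu).exists_forall_of_atTop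
    exact ⟨M, fun t ht => le_of_not_gt fun hMt => (hM t hMt.le).not_ge ht⟩
  have hsup : sSup S ∈ S := (isClosed_Iic.preimage hcont).csSup_mem hS hbdd
  have hS_eq : S = Iic (sSup S) :=
    Subset.antisymm (fun t ht => le_csSup hbdd ht) fun t ht => (monotone_cdf μ ht).trans hsup
  -- `cdf μ ≥ u` on `Ioi (sSup S)`, hence at `sSup S` by continuity
  have hcdf : cdf μ (sSup S) = u := by
    refine le_antisymm hsup
      ((isClosed_le continuous_const hcont).closure_subset_iff (s := Ioi (sSup S)).2 ?_ ?_)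
    · exact fun t ht => show u ≤ cdf μ t from
        not_lt.1 fun h => (not_le.2 ht) (le_csSup hbdd (h.le : cdf μ t ≤ u))
    · rw [closure_Ioi]
      exact self_mem_Ici
  rw [hS_eq, ← ofReal_cdf, hcdf]

theorem map_cdf_eq_volume_restrict_Ioo (hcont : Continuous (cdf μ)) :
    μ.map (cdf μ) = volume.restrict (Ioo 0 1) := by
  refine Measure.ext_of_Iic _ _ fun u => ?_
  rw [Measure.map_apply hcont.measurable measurableSet_Iic,
    Measure.restrict_apply measurableSet_Iic]
  rcases lt_or_ge u 1 with hu | hu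
  · have : Iic u ∩ Ioo 0 1 = Ioc 0 u := by
      ext t
      simp only [mem_inter_iff, mem_Iic, mem_Ioo, mem_Ioc]
      exact ⟨fun ⟨htu, ht0, _⟩ => ⟨ht0, htu⟩, fun ⟨ht0, htu⟩ => ⟨htu, ht0, htu.trans_lt hu⟩⟩
    rw [measure_cdf_preimage_Iic hcont hu, this, volume_Ioc, sub_zero]
  · have h1 : cdf μ ⁻¹' Iic u = univ := eq_univ_of_forall fun t => (cdf_le_one μ t).trans hu
    have h2 : Iic u ∩ Ioo 0 1 = Ioo 0 1 :=
      inter_eq_self_of_subset_right fun t ht => ht.2.le.trans hu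
    rw [h1, h2, measure_univ, volume_Ioo, sub_zero, ENNReal.ofReal_one]

theorem map_cdf_comp_eq_volume_restrict_Ioo {Ω : Type*} [MeasurableSpace Ω] {P : Measure Ω}
    {Y : Ω → ℝ} (hY : Measurable Y) (hlaw : P.map Y = μ) (hcont : Continuous (cdf μ)) :
    P.map (cdf μ ∘ Y) = volume.restrict (Ioo 0 1) := by
  rw [← map_cdf_eq_volume_restrict_Ioo hcont, ← Measure.map_map hcont.measurable hY, hlaw]

end ProbabilityTheory

section NonnegSeries

variable {α ι : Type*} [MeasurableSpace α] {μ : Measure α} [Countable ι] {f : ι → α → ℝ}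
  {g : α → ℝ}

theorem hasSum_integral_of_hasSum_of_nonneg (hf : ∀ i, Integrable (f i) μ)
    (hf_nonneg : ∀ i, 0 ≤ᵐ[μ] f i) (hfg : ∀ᵐ x ∂μ, HasSum (fun i => f i x) (g x))
    (hsum : Summable fun i => ∫ x, f i x ∂μ) :
    HasSum (fun i => ∫ x, f i x ∂μ) (∫ x, g x ∂μ) := by
  have hnorm : ∀ i, ∫ x, ‖f i x‖ ∂μ = ∫ x, f i x ∂μ := fun i =>
    integral_congr_ae <| (hf_nonneg i).mono fun x hx => Real.norm_of_nonneg hx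
  rw [← integral_congr_ae (hfg.mono fun x hx => hx.tsum_eq)]
  exact hasSum_integral_of_summable_integral_norm hf (by simpa only [hnorm] using hsum)

theorem integrable_of_hasSum_of_nonneg (hg : AEStronglyMeasurable g μ)
    (hf : ∀ i, Integrable (f i) μ) (hf_nonneg : ∀ i, 0 ≤ᵐ[μ] f i)
    (hfg : ∀ᵐ x ∂μ, HasSum (fun i => f i x) (g x)) (hsum : Summable fun i => ∫ x, f i x ∂μ) :
    Integrable g μ := by
  have hfg' : ∀ᵐ x ∂μ, HasSum (fun i => f i x) (g x) ∧ ∀ i, 0 ≤ f i x := by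
    filter_upwards [hfg, ae_all_iff.2 hf_nonneg] with x hx hx0 using ⟨hx, hx0⟩
  refine (lintegral_ofReal_ne_top_iff_integrable hg
    (hfg'.mono fun x hx => hx.1.nonneg hx.2)).1 (ne_of_lt ?_)
  calc ∫⁻ x, ENNReal.ofReal (g x) ∂μ = ∫⁻ x, ∑' i, ENNReal.ofReal (f i x) ∂μ :=
        lintegral_congr_ae <| hfg'.mono fun x hx => by
          dsimp only
          rw [← hx.1.tsum_eq, ENNReal.ofReal_tsum_of_nonneg hx.2 hx.1.summable]
    _ = ∑' i, ∫⁻ x, ENNReal.ofReal (f i x) ∂μ :=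
        lintegral_tsum fun i => (hf i).aemeasurable.ennreal_ofReal
    _ = ENNReal.ofReal (∑' i, ∫ x, f i x ∂μ) := by
        rw [ENNReal.ofReal_tsum_of_nonneg (fun i => integral_nonneg_of_ae (hf_nonneg i)) hsum]
        exact tsum_congr fun i => (ofReal_integral_eq_lintegral_ofReal (hf i) (hf_nonneg i)).symm
    _ < ⊤ := ENNReal.ofReal_lt_top

end NonnegSeries

section LogSeries

variable {a : ℝ}

lemma hasSum_rpow_div_neg_log_one_sub_rpow (ha : 0 < a) {u : ℝ} (hu : u ∈ Ioo 0 1) :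
    HasSum (fun l : ℕ+ => u ^ (a * l) / l) (-log (1 - u ^ a)) := by
  have h := hasSum_pow_div_log_of_abs_lt_one (x := u ^ a)
    (by rw [abs_of_nonneg (rpow_nonneg hu.1.le a)]; exact rpow_lt_one hu.1.le hu.2 ha)
  rw [hasSum_pnat_iff_hasSum_succ (f := fun k : ℕ => u ^ (a * k) / k)]
  convert h using 2 with k
  push_cast
  rw [← rpow_natCast, ← rpow_mul hu.1.le, Nat.cast_add_one]

lemma integrableOn_rpow_mul_div (ha : 0 < a) (l : ℕ+) :
    IntegrableOn (fun u : ℝ => u ^ (a * l) / l) (Ioo 0 1) := by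
  have hr : 0 < a * l := by positivity
  exact ((intervalIntegral.intervalIntegrable_rpow' (by linarith)).1.mono_set
    Ioo_subset_Ioc_self).div_const _

lemma setIntegral_rpow_mul_div (ha : 0 < a) (l : ℕ+) :
    ∫ u in Ioo (0 : ℝ) 1, u ^ (a * l) / l = 1 / (l : ℝ) - 1 / (l + 1 / a) := by
  have hr : 0 < a * l := by positivity
  rw [integral_div, ← integral_Ioc_eq_integral_Ioo, ← intervalIntegral.integral_of_le zero_le_one,
    integral_rpow (Or.inl (by linarith)), one_rpow, zero_rpow (by linarith)]
  field_simp
  ring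

lemma summable_setIntegral_rpow_mul_div (ha : 0 < a) :
    Summable fun l : ℕ+ => ∫ u in Ioo (0 : ℝ) 1, u ^ (a * l) / l := by
  simpa only [setIntegral_rpow_mul_div ha] using
    (hasSum_digamma_one_add (x := 1 / a) (by positivity)).summable

lemma measurable_log_one_sub_rpow (a : ℝ) : Measurable fun u : ℝ => log (1 - u ^ a) :=
  measurable_log.comp (measurable_const.sub (measurable_id.pow_const a))

lemma integrableOn_log_one_sub_rpow (ha : 0 < a) :
    IntegrableOn (fun u : ℝ => log (1 - u ^ a)) (Ioo 0 1) := by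
  have h := integrable_of_hasSum_of_nonneg (g := fun u : ℝ => -log (1 - u ^ a))
    (measurable_log_one_sub_rpow a).neg.aestronglyMeasurable (integrableOn_rpow_mul_div ha)
    (fun l => ae_restrict_of_forall_mem measurableSet_Ioo fun u hu =>
      div_nonneg (rpow_nonneg hu.1.le _) (Nat.cast_nonneg _))
    (ae_restrict_of_forall_mem measurableSet_Ioo fun u hu =>
      hasSum_rpow_div_neg_log_one_sub_rpow ha hu)
    (summable_setIntegral_rpow_mul_div ha)
  simpa [IntegrableOn] using h.neg

lemma setIntegral_log_one_sub_rpow (ha : 0 < a) :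
    ∫ u in Ioo (0 : ℝ) 1, log (1 - u ^ a) = -∑' l : ℕ+, (1 / (l : ℝ) - 1 / (l + 1 / a)) := by
  have h := hasSum_integral_of_hasSum_of_nonneg (integrableOn_rpow_mul_div ha)
    (fun l => ae_restrict_of_forall_mem measurableSet_Ioo fun u hu =>
      div_nonneg (rpow_nonneg hu.1.le _) (Nat.cast_nonneg _))
    (ae_restrict_of_forall_mem measurableSet_Ioo fun u hu =>
      hasSum_rpow_div_neg_log_one_sub_rpow ha hu)
    (summable_setIntegral_rpow_mul_div ha)
  simp only [setIntegral_rpow_mul_div ha, integral_neg] at h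
  rw [h.tsum_eq, neg_neg]

end LogSeries

theorem mean_test_statistic_general (Ω : Type*) [MeasureSpace Ω]
    [IsProbabilityMeasure (ℙ : Measure Ω)]
    (n : ℕ) (hn : 0 < n) (X : Fin n → Ω → ℝ)
    (hmeas : ∀ i, Measurable (X i))
    (μ : Measure ℝ) (hid : ∀ i, Measure.map (X i) ℙ = μ)
    (F : ℝ → ℝ) (hF : F = fun x => ProbabilityTheory.cdf μ x) (hFcont : Continuous F)
    (a : ℝ) (ha : 0 < a)
    (A : Ω → ℝ)
    (hA : ∀ ω : Ω, A ω = -(a / n) * ∑ i, Real.log (1 - F (X i ω) ^ a)) :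
    (∫ ω : Ω, A ω ∂(ℙ : Measure Ω)) = a * ∑' l : ℕ+, (1 / (l : ℝ) - 1 / ((l : ℝ) + 1 / a)) ∧
    (∫ ω : Ω, A ω ∂(ℙ : Measure Ω)) = a * (digamma (1 + 1 / a) + Real.eulerMascheroniConstant) ∧
    (a = 1 → (∫ ω : Ω, A ω ∂(ℙ : Measure Ω)) = 1) := by
  subst hF
  have : IsProbabilityMeasure μ :=
    hid ⟨0, hn⟩ ▸ Measure.isProbabilityMeasure_map (hmeas _).aemeasurable
  have hlaw : ∀ i, Measure.map (cdf μ ∘ X i) ℙ = volume.restrict (Ioo 0 1) := fun i =>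
    map_cdf_comp_eq_volume_restrict_Ioo (hmeas i) (hid i) hFcont
  have hint : ∀ i, Integrable (fun ω => log (1 - cdf μ (X i ω) ^ a)) ℙ := fun i =>
    Integrable.comp_measurable (f := cdf μ ∘ X i) (g := fun u => log (1 - u ^ a))
      (by rw [hlaw i]; exact integrableOn_log_one_sub_rpow ha) (hFcont.measurable.comp (hmeas i))
  have hexp : ∀ i, ∫ ω, log (1 - cdf μ (X i ω) ^ a) ∂ℙ =
      -∑' l : ℕ+, (1 / (l : ℝ) - 1 / (l + 1 / a)) := fun i => by
    rw [← setIntegral_log_one_sub_rpow ha, ← hlaw i, integral_map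
      (hFcont.measurable.comp (hmeas i)).aemeasurable
      (measurable_log_one_sub_rpow a).aestronglyMeasurable]
    rfl
  have hmean : ∫ ω, A ω ∂ℙ = a * ∑' l : ℕ+, (1 / (l : ℝ) - 1 / (l + 1 / a)) := by
    simp_rw [hA]
    rw [integral_const_mul, integral_finsetSum _ fun i _ => hint i]
    simp only [hexp, Finset.sum_const, Finset.card_univ, Fintype.card_fin, nsmul_eq_mul]
    field_simp
  have hdigamma := (hasSum_digamma_one_add (x := 1 / a) (by positivity)).tsum_eq
  refine ⟨hmean, hmean.trans (by rw [hdigamma]), fun ha1 => ?_⟩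
  rw [hmean, hdigamma, ha1, div_one, digamma_add_one one_pos, digamma_one]
  ring

/-- The mean of `A = -(a/n)·Σᵢ log(1 - F(Xᵢ)^a)` equals
`a·Σ_{l≥1}(1/l - 1/(l+1/a)) = a·(ψ(1+1/a) + γ)`; in particular it is `1` when `a = 1`. -/
theorem mean_test_statistic (Ω : Type*) [MeasureSpace Ω]
    [IsProbabilityMeasure (ℙ : Measure Ω)]
    (n : ℕ) (hn : 0 < n) (X : Fin n → Ω → ℝ)
    (hmeas : ∀ i, Measurable (X i))
    (hindep : ProbabilityTheory.iIndepFun X ℙ)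
    (μ : Measure ℝ) (hid : ∀ i, Measure.map (X i) ℙ = μ)
    (F : ℝ → ℝ) (hF : F = fun x => ProbabilityTheory.cdf μ x) (hFcont : Continuous F)
    (a : ℝ) (ha : 0 < a)
    (A : Ω → ℝ)
    (hA : ∀ ω : Ω, A ω = -(a / n) * ∑ i, Real.log (1 - F (X i ω) ^ a)) :
    (∫ ω : Ω, A ω ∂(ℙ : Measure Ω)) = a * ∑' l : ℕ+, (1 / (l : ℝ) - 1 / ((l : ℝ) + 1 / a)) ∧
    (∫ ω : Ω, A ω ∂(ℙ : Measure Ω)) = a * (digamma (1 + 1 / a) + Real.eulerMascheroniConstant) ∧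
    (a = 1 → (∫ ω : Ω, A ω ∂(ℙ : Measure Ω)) = 1) :=
  mean_test_statistic_general Ω n hn X hmeas μ hid F hF hFcont a ha A hA
end

section
/- The function f₂(y) = (y/2)·log(1 − e^{−y}) − (1/2)·Σ_{l=1}^∞ e^{−ly}/l² is monotone increasing on (0, ∞), with limit −π²/12 as y → 0⁺ and limit 0 as y → ∞. -/
/-!
Since `y · log (1 - e^{-y}) = -y · Σ_{l ≥ 1} e^{-ly} / l`, for `y > 0` one has
`f₂ y = -½ · Σ_{l ≥ 1} φ (l y) / l²` with `φ t = (1 + t) e^{-t}`. On `[0, ∞)` the function `φ`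
decreases from `φ 0 = 1` to `0`, which gives monotonicity term by term, and both limits follow by
dominated convergence against `Σ 1 / l² = π² / 6`.
-/

open Filter Topology Real Set

theorem hasSum_one_div_pnat_sq : HasSum (fun l : ℕ+ => 1 / (l : ℝ) ^ 2) (π ^ 2 / 6) :=
  hasSum_pnat_iff (f := fun n : ℕ => 1 / (n : ℝ) ^ 2) |>.mpr (by simpa using hasSum_zeta_two)

theorem hasSum_exp_neg_mul_div {y : ℝ} (hy : 0 < y) :
    HasSum (fun l : ℕ+ => exp (-(l * y)) / l) (-log (1 - exp (-y))) := by
  have hx : |exp (-y)| < 1 := by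
    rw [abs_of_pos (exp_pos _)]
    exact exp_lt_one_iff.mpr (neg_lt_zero.mpr hy)
  refine hasSum_pnat_iff_hasSum_succ (f := fun n : ℕ => exp (-(n * y)) / n) |>.mpr ?_
  convert hasSum_pow_div_log_of_abs_lt_one hx using 2 with n
  rw [← exp_nat_mul]
  push_cast
  ring_nf

section ScaledSeries

variable {φ : ℝ → ℝ}

theorem summable_comp_mul_div_sq (hφ : ∀ t, 0 ≤ t → |φ t| ≤ 1) {y : ℝ} (hy : 0 ≤ y) :
    Summable fun l : ℕ+ => φ (l * y) / (l : ℝ) ^ 2 := by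
  refine hasSum_one_div_pnat_sq.summable.of_norm_bounded fun l => ?_
  rw [norm_div, norm_pow, Real.norm_natCast, Real.norm_eq_abs]
  gcongr
  exact hφ _ (by positivity)

theorem antitoneOn_tsum_comp_mul_div_sq (hφ : ∀ t, 0 ≤ t → |φ t| ≤ 1)
    (hanti : AntitoneOn φ (Ici 0)) :
    AntitoneOn (fun y => ∑' l : ℕ+, φ (l * y) / (l : ℝ) ^ 2) (Ici 0) := by
  intro a ha b hb hab
  refine (summable_comp_mul_div_sq hφ hb).tsum_le_tsum (fun l => ?_)
    (summable_comp_mul_div_sq hφ ha)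
  have hl : (0 : ℝ) ≤ l := by positivity
  gcongr
  exact hanti (mul_nonneg hl ha) (mul_nonneg hl hb) (by gcongr)

theorem tendsto_tsum_comp_mul_div_sq (hφ : ∀ t, 0 ≤ t → |φ t| ≤ 1) {L : Filter ℝ} {a : ℝ}
    (hL : ∀ᶠ y in L, 0 ≤ y) (hlim : ∀ l : ℕ+, Tendsto (fun y => φ (l * y)) L (𝓝 a)) :
    Tendsto (fun y => ∑' l : ℕ+, φ (l * y) / (l : ℝ) ^ 2) L (𝓝 (a * (π ^ 2 / 6))) := by
  have h := tendsto_tsum_of_dominated_convergence hasSum_one_div_pnat_sq.summable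
    (fun l => (hlim l).div_const ((l : ℝ) ^ 2)) ?_
  · simpa only [div_eq_mul_one_div a, tsum_mul_left, hasSum_one_div_pnat_sq.tsum_eq] using h
  filter_upwards [hL] with y hy l
  rw [norm_div, norm_pow, Real.norm_natCast, Real.norm_eq_abs]
  gcongr
  exact hφ _ (by positivity)

end ScaledSeries

theorem abs_exp_neg_le_one {t : ℝ} (ht : 0 ≤ t) : |exp (-t)| ≤ 1 := by
  rw [abs_of_pos (exp_pos _)]
  exact exp_le_one_iff.mpr (neg_nonpos.mpr ht)

theorem abs_one_add_mul_exp_neg_le_one {t : ℝ} (ht : 0 ≤ t) : |(1 + t) * exp (-t)| ≤ 1 := by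
  rw [abs_of_nonneg (by positivity), exp_neg, ← div_eq_mul_inv, div_le_one (exp_pos t)]
  linarith [add_one_le_exp t]

theorem antitoneOn_one_add_mul_exp_neg : AntitoneOn (fun t => (1 + t) * exp (-t)) (Ici 0) := by
  intro s hs t _ hst
  simp only [mem_Ici] at hs
  -- `1 + t ≤ (1 + s) (1 + (t - s)) ≤ (1 + s) e^{t - s}`
  have key : 1 + t ≤ (1 + s) * exp (t - s) := by
    nlinarith [add_one_le_exp (t - s), mul_nonneg hs (sub_nonneg.mpr hst)]
  calc (1 + t) * exp (-t) ≤ (1 + s) * exp (t - s) * exp (-t) := by gcongr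
    _ = (1 + s) * exp (-s) := by rw [mul_assoc, ← exp_add]; ring_nf

theorem tendsto_one_add_mul_exp_neg_atTop :
    Tendsto (fun t => (1 + t) * exp (-t)) atTop (𝓝 0) := by
  have h := (tendsto_pow_mul_exp_neg_atTop_nhds_zero 0).add
    (tendsto_pow_mul_exp_neg_atTop_nhds_zero 1)
  simpa only [pow_zero, pow_one, add_zero, add_mul] using h

theorem tsum_one_add_mul_exp_neg_div_sq {y : ℝ} (hy : 0 < y) :
    ∑' l : ℕ+, (1 + l * y) * exp (-(l * y)) / (l : ℝ) ^ 2 =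
      ∑' l : ℕ+, exp (-(l * y)) / (l : ℝ) ^ 2 - y * log (1 - exp (-y)) := by
  have h := (summable_comp_mul_div_sq (fun _ => abs_exp_neg_le_one) hy.le).hasSum.add
    ((hasSum_exp_neg_mul_div hy).mul_left y)
  rw [mul_neg, ← sub_eq_add_neg] at h
  refine h.tsum_eq ▸ tsum_congr fun l => ?_
  field_simp

/-- `f₂(y) = (y/2)·log(1 − e^{−y}) − (1/2)·Σ_{l≥1} e^{−ly}/l²` is monotone increasing on
`(0,∞)`, tends to `−π²/12` as `y → 0⁺` and to `0` as `y → ∞`. -/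
theorem f2_monotone_and_limits
    (f₂ : ℝ → ℝ)
    (hf : ∀ y : ℝ, f₂ y = y / 2 * Real.log (1 - Real.exp (-y)) -
      (1 / 2) * ∑' l : ℕ+, Real.exp (-(l : ℝ) * y) / (l : ℝ) ^ 2) :
    MonotoneOn f₂ (Set.Ioi 0) ∧
    Tendsto f₂ (𝓝[>] 0) (𝓝 (-(Real.pi ^ 2 / 12))) ∧
    Tendsto f₂ atTop (𝓝 0) := by
  set S := fun y : ℝ => ∑' l : ℕ+, (1 + l * y) * exp (-(l * y)) / (l : ℝ) ^ 2
  have hrep : EqOn f₂ (fun y => -(1 / 2) * S y) (Ioi 0) := fun y hy => by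
    simp only [hf, S, neg_mul, tsum_one_add_mul_exp_neg_div_sq (mem_Ioi.mp hy)]
    ring
  have hbound : ∀ t : ℝ, 0 ≤ t → |(1 + t) * exp (-t)| ≤ 1 :=
    fun _ => abs_one_add_mul_exp_neg_le_one
  refine ⟨fun a ha b hb hab => ?_, ?_, ?_⟩
  · have hS := antitoneOn_tsum_comp_mul_div_sq hbound antitoneOn_one_add_mul_exp_neg
      (Ioi_subset_Ici_self ha) (Ioi_subset_Ici_self hb) hab
    rw [hrep ha, hrep hb]
    linarith
  · have hS := tendsto_tsum_comp_mul_div_sq hbound (a := 1) (L := 𝓝[>] 0)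
      (eventually_nhdsWithin_of_forall fun _ hy => le_of_lt hy) fun l => by
        have hc : Continuous fun y : ℝ => (1 + l * y) * exp (-(l * y)) := by fun_prop
        exact (hc.tendsto' 0 1 (by simp)).mono_left nhdsWithin_le_nhds
    convert (hS.const_mul (-(1 / 2))).congr' (eventuallyEq_nhdsWithin_of_eqOn hrep).symm using 2
    ring
  · have hS := tendsto_tsum_comp_mul_div_sq hbound (a := 0) (L := atTop)
      (eventually_ge_atTop 0) fun l =>
        tendsto_one_add_mul_exp_neg_atTop.comp (tendsto_id.const_mul_atTop (by positivity))
    convert (hS.const_mul (-(1 / 2))).congr' (hrep.eventuallyEq_of_mem (Ioi_mem_atTop 0)).symm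
      using 2
    ring
end
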